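/- Assume that at least one of λ₁, λ₂ is nonzero and that g₂λ₁ − λ₂g₁ ≥ 0. Then the set 𝒮 = { z ∈ ℂ \ (-∞, -4m²] : S(z) = 0 } has at most two elements. -/

import Mathlib

/-! Where `l₁ + l₂ z ≠ 0`, `S(z) = 0` says `κ F_a(z) = -(g₁ + g₂ z) / (l₁ + l₂ z)`. The imaginary
part of `F_a(z)` has the sign of `Im z`, that of the right side is
`-(g₂ l₁ - l₂ g₁) Im z / |l₁ + l₂ z|²`, so such zeros are real, and lie in `(-4m², ∞)`. There `F_a`
is strictly increasing while the Möbius function on the right is nonincreasing on each side of its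
pole, so each side holds at most one zero, and none when `g₂ l₁ = l₂ g₁`. A zero with
`l₁ + l₂ z = 0` is a common root of both linear factors, which forces `g₂ l₁ = l₂ g₁`. -/

open MeasureTheory Complex Filter

/-- The half-line `(-∞, -4m²]` viewed as a subset of `ℂ`. -/
def cutSet (m : ℝ) : Set ℂ := {z : ℂ | z.im = 0 ∧ z.re ≤ -4 * m ^ 2}

/-- The function `F_a(z) = ∫_{4m²}^∞ √(1 - 4m²/u) (1/(u+a) - 1/(u+z)) du`. -/
noncomputable def Fa (m a : ℝ) (z : ℂ) : ℂ :=
  ∫ u in Set.Ioi (4 * m ^ 2), (Real.sqrt (1 - 4 * m ^ 2 / u) : ℂ) *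
    (1 / ((u : ℂ) + (a : ℂ)) - 1 / ((u : ℂ) + z))

/-- The function `S(z) = -(λ₁ + λ₂ z) κ F_a(z) - (g₁ + g₂ z)`. -/
noncomputable def Sfun (m a κ g₁ g₂ l₁ l₂ : ℝ) (z : ℂ) : ℂ :=
  -((l₁ : ℂ) + (l₂ : ℂ) * z) * (κ : ℂ) * Fa m a z - ((g₁ : ℂ) + (g₂ : ℂ) * z)

open Set

lemma notMem_cutSet_iff {m : ℝ} {z : ℂ} : z ∉ cutSet m ↔ (z.im = 0 → -4 * m ^ 2 < z.re) := by
  simp [cutSet]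

lemma ofReal_notMem_cutSet_iff {m x : ℝ} : (x : ℂ) ∉ cutSet m ↔ -4 * m ^ 2 < x := by
  simp [cutSet]

lemma ofReal_add_ne_zero_of_notMem_cutSet {m u : ℝ} {z : ℂ} (hz : z ∉ cutSet m)
    (hu : 4 * m ^ 2 < u) : (u : ℂ) + z ≠ 0 := by
  intro h
  have hzu : z = -u := eq_neg_of_add_eq_zero_right h
  exact hz ⟨by simp [hzu], by simp [hzu]; linarith⟩

lemma exists_pos_mul_le_norm_ofReal_add {m : ℝ} {z : ℂ} (hz : z ∉ cutSet m) :
    ∃ c : ℝ, 0 < c ∧ ∀ u ∈ Ioi (4 * m ^ 2 : ℝ), c * u ≤ ‖(u : ℂ) + z‖ := by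
  have hre (u : ℝ) : u + z.re ≤ ‖(u : ℂ) + z‖ := by simpa using re_le_norm ((u : ℂ) + z)
  have him (u : ℝ) : |z.im| ≤ ‖(u : ℂ) + z‖ := by simpa using abs_im_le_norm ((u : ℂ) + z)
  rcases eq_or_ne z.im 0 with hy | hy
  · have hx : 0 < 4 * m ^ 2 + z.re := by linarith [notMem_cutSet_iff.1 hz hy]
    refine ⟨(4 * m ^ 2 + z.re) / (4 * m ^ 2 + z.re + |z.re|), by positivity,
      fun u (hu : 4 * m ^ 2 < u) => ?_⟩
    rw [div_mul_eq_mul_div, div_le_iff₀ (by positivity)]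
    rcases abs_cases z.re with ⟨h, _⟩ | ⟨h, _⟩ <;> nlinarith [hre u]
  · have hy' : 0 < |z.im| := abs_pos.2 hy
    refine ⟨|z.im| / (|z.im| + |z.re|), by positivity, fun u (hu : 4 * m ^ 2 < u) => ?_⟩
    have hu0 : 0 < u := (by positivity : (0 : ℝ) ≤ 4 * m ^ 2).trans_lt hu
    rw [div_mul_eq_mul_div, div_le_iff₀ (by positivity)]
    rcases abs_cases z.re with ⟨h, _⟩ | ⟨h, _⟩ <;> nlinarith [hre u, him u]

lemma sqrt_one_sub_div_pos {b u : ℝ} (hb : 0 ≤ b) (hu : b < u) : 0 < √(1 - b / u) :=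
  Real.sqrt_pos.2 (sub_pos.2 ((div_lt_one (hb.trans_lt hu)).2 hu))

lemma sqrt_one_sub_div_le_one {b u : ℝ} (hb : 0 ≤ b) (hu : b < u) : √(1 - b / u) ≤ 1 :=
  Real.sqrt_le_one.2 (sub_le_self _ (div_nonneg hb (hb.trans hu.le)))

lemma integrableOn_sqrt_div_mul {m : ℝ} (hm : 0 < m) {z w : ℂ} (hz : z ∉ cutSet m)
    (hw : w ∉ cutSet m) :
    IntegrableOn (fun u : ℝ => (√(1 - 4 * m ^ 2 / u) : ℂ) / (((u : ℂ) + z) * ((u : ℂ) + w)))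
      (Ioi (4 * m ^ 2)) := by
  obtain ⟨c, hc, hcz⟩ := exists_pos_mul_le_norm_ofReal_add hz
  obtain ⟨d, hd, hdw⟩ := exists_pos_mul_le_norm_ofReal_add hw
  have hb : 0 < 4 * m ^ 2 := by positivity
  have hcont : ContinuousOn
      (fun u : ℝ => (√(1 - 4 * m ^ 2 / u) : ℂ) / (((u : ℂ) + z) * ((u : ℂ) + w)))
      (Ioi (4 * m ^ 2)) := by
    refine ContinuousOn.div ?_ (by fun_prop) fun u hu => mul_ne_zero
      (ofReal_add_ne_zero_of_notMem_cutSet hz hu) (ofReal_add_ne_zero_of_notMem_cutSet hw hu)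
    exact continuous_ofReal.comp_continuousOn (Real.continuous_sqrt.comp_continuousOn
      (continuousOn_const.sub (continuousOn_const.div continuousOn_id
        fun u (hu : 4 * m ^ 2 < u) => (hb.trans hu).ne')))
  refine Integrable.mono'
    ((integrableOn_Ioi_rpow_of_lt (by norm_num : (-2 : ℝ) < -1) hb).const_mul (c * d)⁻¹)
    (hcont.aestronglyMeasurable measurableSet_Ioi) ?_
  filter_upwards [ae_restrict_mem measurableSet_Ioi] with u (hu : 4 * m ^ 2 < u)
  have hu0 : 0 < u := hb.trans hu
  rw [norm_div, norm_mul, norm_real, Real.norm_of_nonneg (Real.sqrt_nonneg _),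
    Real.rpow_neg_ofNat, zpow_neg, zpow_ofNat]
  calc √(1 - 4 * m ^ 2 / u) / (‖(u : ℂ) + z‖ * ‖(u : ℂ) + w‖) ≤ 1 / ((c * u) * (d * u)) :=
        div_le_div₀ zero_le_one (sqrt_one_sub_div_le_one hb.le hu) (by positivity)
          (mul_le_mul (hcz u hu) (hdw u hu) (by positivity) (norm_nonneg _))
    _ = (c * d)⁻¹ * (u ^ 2)⁻¹ := by field_simp

noncomputable def FaIntegrand (m a : ℝ) (z : ℂ) (u : ℝ) : ℂ :=
  (√(1 - 4 * m ^ 2 / u) : ℂ) * (1 / ((u : ℂ) + (a : ℂ)) - 1 / ((u : ℂ) + z))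

lemma Fa_eq_integral (m a : ℝ) (z : ℂ) :
    Fa m a z = ∫ u in Ioi (4 * m ^ 2), FaIntegrand m a z u := rfl

lemma integrableOn_FaIntegrand {m a : ℝ} (hm : 0 < m) (ha : -4 * m ^ 2 < a) {z : ℂ}
    (hz : z ∉ cutSet m) : IntegrableOn (FaIntegrand m a z) (Ioi (4 * m ^ 2)) := by
  have ha' := ofReal_notMem_cutSet_iff.2 ha
  refine IntegrableOn.congr_fun ((integrableOn_sqrt_div_mul hm ha' hz).const_mul (z - a))
    (fun u (hu : 4 * m ^ 2 < u) => ?_) measurableSet_Ioi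
  have := ofReal_add_ne_zero_of_notMem_cutSet ha' hu
  have := ofReal_add_ne_zero_of_notMem_cutSet hz hu
  simp only [FaIntegrand]
  field_simp
  ring

lemma im_FaIntegrand (m a u : ℝ) (z : ℂ) :
    (FaIntegrand m a z u).im = √(1 - 4 * m ^ 2 / u) * z.im / normSq ((u : ℂ) + z) := by
  simp [FaIntegrand, div_eq_mul_inv, mul_assoc]

lemma setIntegral_Ioi_pos {b : ℝ} {f : ℝ → ℝ} (hf : IntegrableOn f (Ioi b))
    (hpos : ∀ u ∈ Ioi b, 0 < f u) : 0 < ∫ u in Ioi b, f u := by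
  rw [setIntegral_pos_iff_support_of_nonneg_ae
    (ae_restrict_of_forall_mem measurableSet_Ioi fun u hu => (hpos u hu).le) hf]
  refine lt_of_lt_of_le ?_ (measure_mono fun u hu => ⟨(hpos u hu).ne', hu⟩)
  simp

lemma mul_im_Fa_pos {m a : ℝ} (hm : 0 < m) (ha : -4 * m ^ 2 < a) {z : ℂ} (hy : z.im ≠ 0) :
    0 < z.im * (Fa m a z).im := by
  have hz : z ∉ cutSet m := fun h => hy h.1
  have hint := integrableOn_FaIntegrand hm ha hz
  have him : (Fa m a z).im = ∫ u in Ioi (4 * m ^ 2), (FaIntegrand m a z u).im :=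
    (integral_im hint).symm
  rw [him, ← integral_const_mul]
  refine setIntegral_Ioi_pos (hint.im.const_mul _) fun u (hu : 4 * m ^ 2 < u) => ?_
  rw [im_FaIntegrand, show z.im * (√(1 - 4 * m ^ 2 / u) * z.im / normSq ((u : ℂ) + z)) =
    √(1 - 4 * m ^ 2 / u) * (z.im * z.im) / normSq ((u : ℂ) + z) by ring]
  exact div_pos (mul_pos (sqrt_one_sub_div_pos (by positivity) hu) (mul_self_pos.2 hy))
    (normSq_pos.2 (ofReal_add_ne_zero_of_notMem_cutSet hz hu))

lemma exists_pos_Fa_sub_Fa {m a : ℝ} (hm : 0 < m) (ha : -4 * m ^ 2 < a) {x y : ℝ}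
    (hx : -4 * m ^ 2 < x) (hy : -4 * m ^ 2 < y) :
    ∃ I : ℝ, 0 < I ∧ Fa m a y - Fa m a x = (y - x) * (I : ℂ) := by
  have hx' := ofReal_notMem_cutSet_iff.2 hx
  have hy' := ofReal_notMem_cutSet_iff.2 hy
  set ρ : ℝ → ℝ := fun u => √(1 - 4 * m ^ 2 / u) / ((u + x) * (u + y))
  have hρ : IntegrableOn (fun u => (ρ u : ℂ)) (Ioi (4 * m ^ 2)) := by
    simpa [ρ] using integrableOn_sqrt_div_mul hm hx' hy'
  have hρ_re : IntegrableOn ρ (Ioi (4 * m ^ 2)) := by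
    have h := hρ.re
    simp only [RCLike.re_to_complex, ofReal_re] at h
    exact h
  refine ⟨∫ u in Ioi (4 * m ^ 2), ρ u, setIntegral_Ioi_pos hρ_re fun u (hu : 4 * m ^ 2 < u) => ?_,
    ?_⟩
  · have := sqrt_one_sub_div_pos (by positivity) hu
    have : 0 < u + x := by linarith
    have : 0 < u + y := by linarith
    positivity
  rw [Fa_eq_integral, Fa_eq_integral, ← integral_sub (integrableOn_FaIntegrand hm ha hy')
    (integrableOn_FaIntegrand hm ha hx'), ← integral_complex_ofReal, ← integral_const_mul]
  refine setIntegral_congr_fun measurableSet_Ioi fun u (hu : 4 * m ^ 2 < u) => ?_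
  have := ofReal_add_ne_zero_of_notMem_cutSet hx' hu
  have := ofReal_add_ne_zero_of_notMem_cutSet hy' hu
  simp only [FaIntegrand, ρ]
  push_cast
  field_simp
  ring

lemma im_linear_mul_conj_linear (g₁ g₂ l₁ l₂ : ℝ) (z : ℂ) :
    (((g₁ : ℂ) + g₂ * z) * (starRingEnd ℂ) ((l₁ : ℂ) + l₂ * z)).im =
      (g₂ * l₁ - l₂ * g₁) * z.im := by
  simp only [mul_im, mul_re, add_re, add_im, map_add, map_mul, conj_ofReal, conj_re, conj_im,
    ofReal_re, ofReal_im]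
  ring

lemma im_eq_zero_of_Sfun_eq_zero {m a κ g₁ g₂ l₁ l₂ : ℝ} (hm : 0 < m) (ha : -4 * m ^ 2 < a)
    (hκ : 0 < κ) (hD : 0 ≤ g₂ * l₁ - l₂ * g₁) {z : ℂ} (hΛ : (l₁ : ℂ) + l₂ * z ≠ 0)
    (hS : Sfun m a κ g₁ g₂ l₁ l₂ z = 0) : z.im = 0 := by
  by_contra hy
  have hΛF : ((l₁ : ℂ) + l₂ * z) * κ * Fa m a z = -(g₁ + g₂ * z) := by
    rw [Sfun] at hS
    linear_combination -hS
  have key : normSq ((l₁ : ℂ) + l₂ * z) * κ * (Fa m a z).im = -((g₂ * l₁ - l₂ * g₁) * z.im) := by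
    have h := congrArg (fun w => (w * (starRingEnd ℂ) ((l₁ : ℂ) + l₂ * z)).im) hΛF
    have hl : ((l₁ : ℂ) + l₂ * z) * κ * Fa m a z * (starRingEnd ℂ) ((l₁ : ℂ) + l₂ * z) =
        ((normSq ((l₁ : ℂ) + l₂ * z) * κ : ℝ) : ℂ) * Fa m a z := by
      push_cast
      rw [← mul_conj]
      ring
    simpa only [hl, im_ofReal_mul, neg_mul, neg_im, im_linear_mul_conj_linear] using h
  linarith [mul_pos (mul_pos (normSq_pos.2 hΛ) hκ) (mul_im_Fa_pos hm ha hy),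
    mul_nonneg hD (mul_self_nonneg z.im), congrArg (· * z.im) key]

lemma mul_neg_of_Sfun_ofReal_eq_zero {m a κ g₁ g₂ l₁ l₂ : ℝ} (hm : 0 < m)
    (ha : -4 * m ^ 2 < a) (hκ : 0 < κ) (hD : 0 ≤ g₂ * l₁ - l₂ * g₁) {x y : ℝ}
    (hx : -4 * m ^ 2 < x) (hy : -4 * m ^ 2 < y) (hxy : x ≠ y)
    (hSx : Sfun m a κ g₁ g₂ l₁ l₂ x = 0) (hSy : Sfun m a κ g₁ g₂ l₁ l₂ y = 0)
    (hΛx : l₁ + l₂ * x ≠ 0) (hΛy : l₁ + l₂ * y ≠ 0) :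
    (l₁ + l₂ * x) * (l₁ + l₂ * y) < 0 ∧ 0 < g₂ * l₁ - l₂ * g₁ := by
  obtain ⟨I, hI, hF⟩ := exists_pos_Fa_sub_Fa hm ha hx hy
  rw [Sfun] at hSx hSy
  have key : (y - x) * (κ * I * ((l₁ + l₂ * x) * (l₁ + l₂ * y)) + (g₂ * l₁ - l₂ * g₁)) = 0 := by
    have : ((y - x) * (κ * I * ((l₁ + l₂ * x) * (l₁ + l₂ * y)) + (g₂ * l₁ - l₂ * g₁)) : ℂ) = 0 := by
      linear_combination (l₁ + l₂ * (y : ℂ)) * hSx - (l₁ + l₂ * (x : ℂ)) * hSy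
        - κ * (l₁ + l₂ * (x : ℂ)) * (l₁ + l₂ * (y : ℂ)) * hF
    exact_mod_cast this
  have hP := (mul_eq_zero.1 key).resolve_left (sub_ne_zero.2 hxy.symm)
  have hκI := mul_pos hκ hI
  have hneg : (l₁ + l₂ * x) * (l₁ + l₂ * y) < 0 :=
    lt_of_le_of_ne (by by_contra h; linarith [mul_pos hκI (not_le.1 h)]) (mul_ne_zero hΛx hΛy)
  exact ⟨hneg, by linarith [mul_neg_of_pos_of_neg hκI hneg]⟩

lemma eq_of_linear_eq_zero {l₁ l₂ : ℝ} (hl : l₁ ≠ 0 ∨ l₂ ≠ 0) {z w : ℂ}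
    (hz : (l₁ : ℂ) + l₂ * z = 0) (hw : (l₁ : ℂ) + l₂ * w = 0) : z = w := by
  have hl₂ : l₂ ≠ 0 := by
    rintro rfl
    exact hl.elim (fun h => h (by simpa using hz)) (· rfl)
  have : (l₂ : ℂ) * (z - w) = 0 := by linear_combination hz - hw
  exact sub_eq_zero.1 ((mul_eq_zero.1 this).resolve_left (ofReal_ne_zero.2 hl₂))

lemma Set.exists_subset_pair_of_subsingleton_inter {α : Type*} [Nonempty α] {s : Set α}
    (p : α → Prop) (h₁ : (s ∩ {x | p x}).Subsingleton) (h₂ : (s ∩ {x | ¬p x}).Subsingleton) :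
    ∃ a b, s ⊆ {a, b} := by
  have (t : Set α) (ht : t.Subsingleton) : ∃ a, t ⊆ {a} := by
    rcases ht.eq_empty_or_singleton with rfl | ⟨a, rfl⟩
    exacts [⟨Classical.arbitrary α, empty_subset _⟩, ⟨a, subset_rfl⟩]
  obtain ⟨a, ha⟩ := this _ h₁
  obtain ⟨b, hb⟩ := this _ h₂
  exact ⟨a, b, fun x hx => (em (p x)).imp (ha ⟨hx, ·⟩) (hb ⟨hx, ·⟩)⟩

lemma mul_sub_mul_eq_zero_of_Sfun_eq_zero {m a κ g₁ g₂ l₁ l₂ : ℝ} {z : ℂ}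
    (hS : Sfun m a κ g₁ g₂ l₁ l₂ z = 0) (hΛ : (l₁ : ℂ) + l₂ * z = 0) :
    g₂ * l₁ - l₂ * g₁ = 0 := by
  rw [Sfun, hΛ] at hS
  have hG : (g₁ : ℂ) + g₂ * z = 0 := by linear_combination -hS
  exact_mod_cast (show ((g₂ * l₁ - l₂ * g₁ : ℝ) : ℂ) = 0 by
    push_cast
    linear_combination (g₂ : ℂ) * hΛ - (l₂ : ℂ) * hG)

lemma mul_neg_of_Sfun_eq_zero {m a κ g₁ g₂ l₁ l₂ : ℝ} (hm : 0 < m) (ha : -4 * m ^ 2 < a)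
    (hκ : 0 < κ) (hD : 0 ≤ g₂ * l₁ - l₂ * g₁) {z w : ℂ} (hz : z ∉ cutSet m)
    (hw : w ∉ cutSet m) (hzw : z ≠ w) (hSz : Sfun m a κ g₁ g₂ l₁ l₂ z = 0)
    (hSw : Sfun m a κ g₁ g₂ l₁ l₂ w = 0) (hΛz : (l₁ : ℂ) + l₂ * z ≠ 0)
    (hΛw : (l₁ : ℂ) + l₂ * w ≠ 0) :
    (l₁ + l₂ * z.re) * (l₁ + l₂ * w.re) < 0 ∧ 0 < g₂ * l₁ - l₂ * g₁ := by
  obtain ⟨x, rfl⟩ : ∃ x : ℝ, z = x :=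
    ⟨z.re, ext rfl (by simpa using im_eq_zero_of_Sfun_eq_zero hm ha hκ hD hΛz hSz)⟩
  obtain ⟨y, rfl⟩ : ∃ y : ℝ, w = y :=
    ⟨w.re, ext rfl (by simpa using im_eq_zero_of_Sfun_eq_zero hm ha hκ hD hΛw hSw)⟩
  simpa only [ofReal_re] using mul_neg_of_Sfun_ofReal_eq_zero hm ha hκ hD
    (ofReal_notMem_cutSet_iff.1 hz) (ofReal_notMem_cutSet_iff.1 hw) (fun h => hzw (h ▸ rfl))
    hSz hSw (by exact_mod_cast hΛz) (by exact_mod_cast hΛw)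

theorem stmt_9 (m a lam hb κ g₁ g₂ l₁ l₂ : ℝ) (hm : 0 < m) (ha : -4 * m ^ 2 < a)
    (hlam : 0 < lam) (hhb : 0 < hb) (hκ : κ = lam * hb / (16 * Real.pi ^ 2))
    (hl : l₁ ≠ 0 ∨ l₂ ≠ 0) (hineq : 0 ≤ g₂ * l₁ - l₂ * g₁) :
    ∃ z₁ z₂ : ℂ, {z : ℂ | z ∉ cutSet m ∧ Sfun m a κ g₁ g₂ l₁ l₂ z = 0} ⊆ {z₁, z₂} := by
  have hκ' : 0 < κ := by rw [hκ]; positivity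
  rcases hineq.eq_or_lt with hD | hD
  · refine exists_subset_pair_of_subsingleton_inter (fun z => (l₁ : ℂ) + l₂ * z = 0)
      (fun z hz w hw => eq_of_linear_eq_zero hl hz.2 hw.2) fun z hz w hw => ?_
    by_contra hzw
    exact (mul_neg_of_Sfun_eq_zero hm ha hκ' hineq hz.1.1 hw.1.1 hzw hz.1.2 hw.1.2 hz.2
      hw.2).2.ne hD
  · have hΛ {z : ℂ} (hS : Sfun m a κ g₁ g₂ l₁ l₂ z = 0) : (l₁ : ℂ) + l₂ * z ≠ 0 :=
      fun h => hD.ne' (mul_sub_mul_eq_zero_of_Sfun_eq_zero hS h)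
    -- two distinct zeros lie on opposite sides of the root of `l₁ + l₂ x`
    refine exists_subset_pair_of_subsingleton_inter (fun z => 0 < l₁ + l₂ * z.re)
      (fun z hz w hw => ?_) fun z hz w hw => ?_ <;> by_contra hzw <;>
      have hneg := (mul_neg_of_Sfun_eq_zero hm ha hκ' hineq hz.1.1 hw.1.1 hzw hz.1.2 hw.1.2
        (hΛ hz.1.2) (hΛ hw.1.2)).1
    · linarith [(mul_pos hz.2 hw.2 : 0 < (l₁ + l₂ * z.re) * (l₁ + l₂ * w.re))]
    · linarith [mul_nonneg_of_nonpos_of_nonpos (not_lt.1 hz.2) (not_lt.1 hw.2)]
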